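/- Let u = (−1 + i√3)/2 ∈ ℂ and define, for n = 3 and n = 5, Δ_n(t) = det(I − t⁻¹·A_n·B_n⁻¹·A_n⁻¹ + A_n·B_n⁻¹·A_n⁻¹·B_n − t·B_n + B_n·A_n·B_n⁻¹·A_n⁻¹) / det(t·B_n − I), where A₃ = [[1,0,0],[−2,1,0],[1,−1,1]], B₃ = [[1,u,u²],[0,1,2u],[0,0,1]], A₅ = [[1,0,0,0,0],[−4,1,0,0,0],[6,−3,1,0,0],[−4,3,−2,1,0],[1,−1,1,−1,1]], B₅ = [[1,u,u²,u³,u⁴],[0,1,2u,3u²,4u³],[0,0,1,3u,6u²],[0,0,0,1,4u],[0,0,0,0,1]]. Then both Δ₃(t) and Δ₅(t) vanish to exactly first order at t = 1, the limit as t → 1 of Δ₅(t)/Δ₃(t) exists and equals −28/3; in particular |𝒜_{K,5}(1)| = 28/3. -/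

import Mathlib

/-! Multiplying the Fox matrix by `t` turns it into the quadratic pencil
`t (1 + P B + R) - P - t² B` with `P = A B⁻¹ A⁻¹` and `R = B A B⁻¹ A⁻¹ = B P`, while the
denominator is `(t - 1)ⁿ` because `B` is unipotent upper triangular. Computing `P`, `P B`, `R`
and the determinant of the pencil in `ℤ[u]`, where `u² + u + 1 = 0`, gives
`Δ₃(t) = -(t - 1)(t² - 5t + 1)/t³` and `Δ₅(t) = -(t - 1)(t⁴ - 9t³ + 44t² - 9t + 1)/t⁵`.
Hence `Δₙ(t)/(t - 1)` tends to `3` and `-28` at `t = 1`, and the quotient to `-28/3`. -/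

open Matrix Filter

noncomputable def u41 : ℂ := (-1 + Complex.I * Real.sqrt 3) / 2

noncomputable def A3 : Matrix (Fin 3) (Fin 3) ℂ := !![1, 0, 0; -2, 1, 0; 1, -1, 1]

noncomputable def B3 : Matrix (Fin 3) (Fin 3) ℂ :=
  !![1, u41, u41 ^ 2; 0, 1, 2 * u41; 0, 0, 1]

noncomputable def A5 : Matrix (Fin 5) (Fin 5) ℂ :=
  !![1, 0, 0, 0, 0; -4, 1, 0, 0, 0; 6, -3, 1, 0, 0; -4, 3, -2, 1, 0; 1, -1, 1, -1, 1]

noncomputable def B5 : Matrix (Fin 5) (Fin 5) ℂ :=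
  !![1, u41, u41 ^ 2, u41 ^ 3, u41 ^ 4; 0, 1, 2 * u41, 3 * u41 ^ 2, 4 * u41 ^ 3;
     0, 0, 1, 3 * u41, 6 * u41 ^ 2; 0, 0, 0, 1, 4 * u41; 0, 0, 0, 0, 1]

/-- Wada's twisted Alexander invariant `Δ_{K,ρ₃}(t)` for the figure-eight knot. -/
noncomputable def Δ₃ (t : ℂ) : ℂ :=
  det ((1 : Matrix (Fin 3) (Fin 3) ℂ) - t⁻¹ • (A3 * B3⁻¹ * A3⁻¹) +
      A3 * B3⁻¹ * A3⁻¹ * B3 - t • B3 + B3 * A3 * B3⁻¹ * A3⁻¹) /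
    det (t • B3 - 1)

/-- Wada's twisted Alexander invariant `Δ_{K,ρ₅}(t)` for the figure-eight knot. -/
noncomputable def Δ₅ (t : ℂ) : ℂ :=
  det ((1 : Matrix (Fin 5) (Fin 5) ℂ) - t⁻¹ • (A5 * B5⁻¹ * A5⁻¹) +
      A5 * B5⁻¹ * A5⁻¹ * B5 - t • B5 + B5 * A5 * B5⁻¹ * A5⁻¹) /
    det (t • B5 - 1)

open Topology

lemma u41_sq_add_u41_add_one : u41 ^ 2 + u41 + 1 = 0 := by
  have h : (Real.sqrt 3 : ℂ) ^ 2 = 3 := by norm_cast; simp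
  unfold u41
  linear_combination (Complex.I ^ 2 / 4) * h + (3 / 4 : ℂ) * Complex.I_sq

section Wada

variable {n : Type*} [Fintype n] [DecidableEq n]

theorem det_wada_numerator {K : Type*} [Field K] (P B R : Matrix n n K) {t : K} (ht : t ≠ 0) :
    det (1 - t⁻¹ • P + P * B - t • B + R) =
      det (t • (1 + P * B + R) - P - t ^ 2 • B) / t ^ Fintype.card n := by
  rw [eq_div_iff (pow_ne_zero _ ht), mul_comm, ← det_smul]
  congr 1
  simp only [smul_add, smul_sub, smul_smul, mul_inv_cancel₀ ht, one_smul, pow_two]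
  abel

theorem det_smul_sub_one_of_isUpperTriangular {R : Type*} [CommRing R] [LinearOrder n]
    {B : Matrix n n R} (hB : B.IsUpperTriangular) (hdiag : ∀ i, B i i = 1) (t : R) :
    det (t • B - 1) = (t - 1) ^ Fintype.card n := by
  have h : (t • B - 1).IsUpperTriangular :=
    BlockTriangular.sub (fun i j hij => by simp [hB hij]) blockTriangular_one
  simp [det_of_isUpperTriangular h, hdiag]

end Wada

theorem tendsto_div_sub_of_eventually_eq_sub_mul {𝕜 : Type*} [Field 𝕜] [TopologicalSpace 𝕜]
    {f g : 𝕜 → 𝕜} {a c : 𝕜} (hg : ContinuousAt g a) (hga : g a = c)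
    (hfg : ∀ᶠ t in 𝓝[≠] a, f t = (t - a) * g t) :
    Tendsto (fun t => f t / (t - a)) (𝓝[≠] a) (𝓝 c) := by
  refine (hga ▸ hg.tendsto.mono_left nhdsWithin_le_nhds).congr' ?_
  filter_upwards [hfg, self_mem_nhdsWithin] with t hf ht
  rw [hf, mul_div_cancel_left₀ _ (sub_ne_zero.2 ht)]

lemma eventually_ne_zero_nhdsNE_one : ∀ᶠ t : ℂ in 𝓝[≠] 1, t ≠ 0 :=
  (eventually_ne_nhds one_ne_zero).filter_mono nhdsWithin_le_nhds

lemma det_A3 : A3.det = 1 := by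
  simp [A3, det_succ_row_zero, Fin.sum_univ_succ]

lemma B3_inv : B3⁻¹ =
    !![1, -u41, u41 ^ 2; 0, 1, -2 * u41; 0, 0, 1] := by
  refine inv_eq_left_inv ?_
  ext i j; fin_cases i <;> fin_cases j <;> simp [B3, mul_apply, Fin.sum_univ_succ]
  ring

-- Entries of products are written in the basis `1, u41`, using `u41 ^ 2 = -1 - u41`.
lemma A3_mul_B3_inv_mul_A3_inv : A3 * B3⁻¹ * A3⁻¹ =
    !![-3 * u41, -1 - 2 * u41, -1 - u41;
      2 + 4 * u41, 3 + 2 * u41, 2;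
      -1 - u41, -1, u41] := by
  have hu := u41_sq_add_u41_add_one
  refine (congrArg (· * A3⁻¹) ?_).trans (mul_nonsing_inv_cancel_right _ _ (by simp [det_A3]))
  rw [B3_inv]
  ext i j; fin_cases i <;> fin_cases j <;> simp [A3, mul_apply, Fin.sum_univ_succ] <;> grind

lemma A3_mul_B3_inv_mul_A3_inv_mul_B3 : A3 * B3⁻¹ * A3⁻¹ * B3 =
    !![-3 * u41, 2 + u41, u41;
      2 + 4 * u41, -1, 0;
      -1 - u41, 0, 0] := by
  have hu := u41_sq_add_u41_add_one
  rw [A3_mul_B3_inv_mul_A3_inv]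
  ext i j; fin_cases i <;> fin_cases j <;> simp [B3, mul_apply, Fin.sum_univ_succ] <;> grind

lemma B3_mul_A3_mul_B3_inv_mul_A3_inv : B3 * A3 * B3⁻¹ * A3⁻¹ =
    !![-4 - 4 * u41, -2, u41;
      4 + 4 * u41, 3, -2 * u41;
      -1 - u41, -1, u41] := by
  have hu := u41_sq_add_u41_add_one
  simp only [Matrix.mul_assoc]
  rw [← Matrix.mul_assoc A3, A3_mul_B3_inv_mul_A3_inv]
  ext i j; fin_cases i <;> fin_cases j <;> simp [B3, mul_apply, Fin.sum_univ_succ] <;> grind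

lemma det_pencil3 (t : ℂ) :
    det (t • (1 + A3 * B3⁻¹ * A3⁻¹ * B3 + B3 * A3 * B3⁻¹ * A3⁻¹) - A3 * B3⁻¹ * A3⁻¹ -
        t ^ 2 • B3) = -((t - 1) ^ 4 * (t ^ 2 - 5 * t + 1)) := by
  have hu := u41_sq_add_u41_add_one
  rw [A3_mul_B3_inv_mul_A3_inv_mul_B3, B3_mul_A3_mul_B3_inv_mul_A3_inv,
    A3_mul_B3_inv_mul_A3_inv]
  simp [det_fin_three, one_apply, B3]
  grind

lemma B3_isUpperTriangular : B3.IsUpperTriangular := fun i j h => by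
  fin_cases i <;> fin_cases j <;> simp_all [B3]

lemma Δ₃_eq_sub_one_mul {t : ℂ} (ht₀ : t ≠ 0) :
    Δ₃ t = (t - 1) * (-(t ^ 2 - 5 * t + 1) / t ^ 3) := by
  rw [Δ₃, det_wada_numerator _ _ _ ht₀, det_pencil3,
    det_smul_sub_one_of_isUpperTriangular B3_isUpperTriangular
      (by simp [B3, Fin.forall_fin_succ])]
  simp only [Fintype.card_fin]
  field_simp

lemma det_A5 : A5.det = 1 := by
  simp [A5, det_succ_row_zero, Fin.sum_univ_succ]

lemma B5_inv : B5⁻¹ =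
    !![1, -u41, u41 ^ 2, -u41 ^ 3, u41 ^ 4;
      0, 1, -2 * u41, 3 * u41 ^ 2, -4 * u41 ^ 3;
      0, 0, 1, -3 * u41, 6 * u41 ^ 2;
      0, 0, 0, 1, -4 * u41;
      0, 0, 0, 0, 1] := by
  refine inv_eq_left_inv ?_
  ext i j; fin_cases i <;> fin_cases j <;> simp [B5, mul_apply, Fin.sum_univ_succ] <;> ring

lemma A5_mul_B5_inv_mul_A5_inv : A5 * B5⁻¹ * A5⁻¹ =
    !![-9 - 9 * u41, -6 - 3 * u41, -3, -1 + u41, u41;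
      24 + 12 * u41, 12 - 3 * u41, 2 - 8 * u41, -3 - 7 * u41, -4 - 4 * u41;
      -18, -3 + 12 * u41, 7 + 12 * u41, 9 + 6 * u41, 6;
      4 - 4 * u41, -3 - 7 * u41, -6 - 4 * u41, -4 + u41, 4 * u41;
      u41, 1 + u41, 1, -u41, -1 - u41] := by
  have hu := u41_sq_add_u41_add_one
  refine (congrArg (· * A5⁻¹) ?_).trans (mul_nonsing_inv_cancel_right _ _ (by simp [det_A5]))
  rw [B5_inv]
  ext i j; fin_cases i <;> fin_cases j <;> simp [A5, mul_apply, Fin.sum_univ_succ] <;> grind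

lemma A5_mul_B5_inv_mul_A5_inv_mul_B5 : A5 * B5⁻¹ * A5⁻¹ * B5 =
    !![-9 - 9 * u41, 3 - 3 * u41, 3 + 3 * u41, -1 + u41, -1 - u41;
      24 + 12 * u41, 9 * u41, -4 - 2 * u41, -u41, 0;
      -18, -3 - 6 * u41, 1, 0, 0;
      4 - 4 * u41, 1 + u41, 0, 0, 0;
      u41, 0, 0, 0, 0] := by
  have hu := u41_sq_add_u41_add_one
  rw [A5_mul_B5_inv_mul_A5_inv]
  ext i j; fin_cases i <;> fin_cases j <;> simp [B5, mul_apply, Fin.sum_univ_succ] <;> grind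

lemma B5_mul_A5_mul_B5_inv_mul_A5_inv : B5 * A5 * B5⁻¹ * A5⁻¹ =
    !![16 * u41, 8 + 8 * u41, 4, -2 * u41, -1 - u41;
      -32 * u41, -20 - 20 * u41, -12, 7 * u41, 4 + 4 * u41;
      24 * u41, 18 + 18 * u41, 13, -9 * u41, -6 - 6 * u41;
      -8 * u41, -7 - 7 * u41, -6, 5 * u41, 4 + 4 * u41;
      u41, 1 + u41, 1, -u41, -1 - u41] := by
  have hu := u41_sq_add_u41_add_one
  simp only [Matrix.mul_assoc]
  rw [← Matrix.mul_assoc A5, A5_mul_B5_inv_mul_A5_inv]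
  ext i j; fin_cases i <;> fin_cases j <;> simp [B5, mul_apply, Fin.sum_univ_succ] <;> grind

lemma det_pencil5 (t : ℂ) :
    det (t • (1 + A5 * B5⁻¹ * A5⁻¹ * B5 + B5 * A5 * B5⁻¹ * A5⁻¹) - A5 * B5⁻¹ * A5⁻¹ -
        t ^ 2 • B5) = -((t - 1) ^ 6 * (t ^ 4 - 9 * t ^ 3 + 44 * t ^ 2 - 9 * t + 1)) := by
  have hu := u41_sq_add_u41_add_one
  rw [A5_mul_B5_inv_mul_A5_inv_mul_B5, B5_mul_A5_mul_B5_inv_mul_A5_inv,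
    A5_mul_B5_inv_mul_A5_inv]
  simp [det_succ_row_zero, Fin.sum_univ_succ, Fin.succAbove, Fin.castSucc, Fin.castAdd, Fin.castLE,
    one_apply, B5]
  grind

lemma B5_isUpperTriangular : B5.IsUpperTriangular := fun i j h => by
  fin_cases i <;> fin_cases j <;> simp_all [B5]

lemma Δ₅_eq_sub_one_mul {t : ℂ} (ht₀ : t ≠ 0) :
    Δ₅ t = (t - 1) * (-(t ^ 4 - 9 * t ^ 3 + 44 * t ^ 2 - 9 * t + 1) / t ^ 5) := by
  rw [Δ₅, det_wada_numerator _ _ _ ht₀, det_pencil5,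
    det_smul_sub_one_of_isUpperTriangular B5_isUpperTriangular
      (by simp [B5, Fin.forall_fin_succ])]
  simp only [Fintype.card_fin]
  field_simp

lemma tendsto_Δ₃_div_sub_one : Tendsto (fun t => Δ₃ t / (t - 1)) (𝓝[≠] 1) (𝓝 3) :=
  tendsto_div_sub_of_eventually_eq_sub_mul (g := fun t => -(t ^ 2 - 5 * t + 1) / t ^ 3)
    (by fun_prop (disch := norm_num)) (by norm_num)
    (eventually_ne_zero_nhdsNE_one.mono fun _ => Δ₃_eq_sub_one_mul)

lemma tendsto_Δ₅_div_sub_one : Tendsto (fun t => Δ₅ t / (t - 1)) (𝓝[≠] 1) (𝓝 (-28)) :=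
  tendsto_div_sub_of_eventually_eq_sub_mul
    (g := fun t => -(t ^ 4 - 9 * t ^ 3 + 44 * t ^ 2 - 9 * t + 1) / t ^ 5)
    (by fun_prop (disch := norm_num)) (by norm_num)
    (eventually_ne_zero_nhdsNE_one.mono fun _ => Δ₅_eq_sub_one_mul)

theorem A_K5_at_one :
    (∃ c : ℂ, c ≠ 0 ∧
      Tendsto (fun t : ℂ => Δ₃ t / (t - 1)) (nhdsWithin 1 {(1 : ℂ)}ᶜ) (nhds c)) ∧
    (∃ c : ℂ, c ≠ 0 ∧
      Tendsto (fun t : ℂ => Δ₅ t / (t - 1)) (nhdsWithin 1 {(1 : ℂ)}ᶜ) (nhds c)) ∧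
    Tendsto (fun t : ℂ => Δ₅ t / Δ₃ t) (nhdsWithin 1 {(1 : ℂ)}ᶜ) (nhds (-28 / 3)) ∧
    ‖(-28 / 3 : ℂ)‖ = 28 / 3 := by
  refine ⟨⟨3, by norm_num, tendsto_Δ₃_div_sub_one⟩, ⟨-28, by norm_num, tendsto_Δ₅_div_sub_one⟩,
    ?_, by norm_num [norm_div]⟩
  refine (tendsto_Δ₅_div_sub_one.div tendsto_Δ₃_div_sub_one (by norm_num)).congr' ?_
  filter_upwards [self_mem_nhdsWithin] with t ht
  exact div_div_div_cancel_right₀ (sub_ne_zero.2 ht) _ _
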